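/- arXiv:2511.06557 — 7 statements merged into one kernel-verified Lean document; each statement's English description precedes it below -/
import Mathlib

section
/- Let n ≥ 1 and let λ, μ : {1,…,n} → ℝ satisfy 0 < λ_j ≤ μ_j for all j and λ_1 ≥ λ_2 ≥ … ≥ λ_n. Define A_j = Σ_{l=1}^{j} λ_l and define F : {1,…,n} → ℝ recursively by F_1 = λ_1 + μ_1 and F_j = max(A_j, F_{j-1}) + μ_j for j ≥ 2. Then F_j = λ_1 + Σ_{l=1}^{j} μ_l for every j ∈ {1,…,n}; that is, the physician serves the patients with no idle time, so the block schedule produced by Algorithm 1 is a no-idle block schedule (Lemma 1). -/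
/-!
By induction on `j`: patient `j + 1` leaves the PA at
`A_{j+1} = λ_1 + Σ_{l ≤ j} λ_{l+1} ≤ λ_1 + Σ_{l ≤ j} μ_l = F_j`, since `λ_{l+1} ≤ λ_l ≤ μ_l`,
so the maximum in the recursion is always `F_j` and the physician never waits.
-/

open Finset

theorem sum_Icc_succ_le_add_sum_Icc {α : Type*} [AddCommMonoid α] [PartialOrder α]
    [IsOrderedAddMonoid α] {lam mu : ℕ → α} {k : ℕ}
    (hle : ∀ l, 1 ≤ l → l ≤ k → lam l ≤ mu l)
    (hanti : ∀ l, 1 ≤ l → l ≤ k → lam (l + 1) ≤ lam l) :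
    ∑ l ∈ Icc 1 (k + 1), lam l ≤ lam 1 + ∑ l ∈ Icc 1 k, mu l := by
  induction k with
  | zero => simp
  | succ k ih =>
    rw [sum_Icc_succ_top (by omega) lam, sum_Icc_succ_top (by omega) mu, ← add_assoc]
    gcongr
    · exact ih (fun l h1 h2 => hle l h1 (by omega)) (fun l h1 h2 => hanti l h1 (by omega))
    · calc lam (k + 1 + 1) ≤ lam (k + 1) := hanti (k + 1) (by omega) le_rfl
        _ ≤ mu (k + 1) := hle (k + 1) (by omega) le_rfl

theorem stmt_1_general (n : ℕ) (lam mu : ℕ → ℝ)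
    (hle : ∀ j ∈ Finset.Icc 1 n, lam j ≤ mu j)
    (hmono : ∀ i j, 1 ≤ i → i ≤ j → j ≤ n → lam j ≤ lam i)
    (A : ℕ → ℝ) (hA : ∀ j, A j = ∑ l ∈ Finset.Icc 1 j, lam l)
    (F : ℕ → ℝ) (hF1 : F 1 = lam 1 + mu 1)
    (hF : ∀ j, 2 ≤ j → j ≤ n → F j = max (A j) (F (j - 1)) + mu j) :
    ∀ j ∈ Finset.Icc 1 n, F j = lam 1 + ∑ l ∈ Finset.Icc 1 j, mu l := by
  simp only [mem_Icc, and_imp]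
  intro j hj1 hjn
  induction j, hj1 using Nat.le_induction with
  | base => simpa using hF1
  | succ k hk ih =>
    have ihk := ih (by omega)
    have hno_wait : A (k + 1) ≤ F k := by
      rw [hA, ihk]
      exact sum_Icc_succ_le_add_sum_Icc (fun l h1 h2 => hle l (mem_Icc.mpr ⟨h1, by omega⟩))
        (fun l h1 h2 => hmono l (l + 1) h1 (by omega) (by omega))
    rw [hF (k + 1) (by omega) hjn, Nat.add_sub_cancel, max_eq_right hno_wait, ihk,
      sum_Icc_succ_top (by omega), add_assoc]

/-- Lemma 1: with `A_j = Σ_{l=1}^j λ_l`, `F_1 = λ_1 + μ_1` and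
`F_j = max(A_j, F_{j-1}) + μ_j`, we have `F_j = λ_1 + Σ_{l=1}^j μ_l` for every
`j ∈ {1,…,n}`: the physician incurs no idle time. -/
theorem stmt_1 (n : ℕ) (hn : 1 ≤ n) (lam mu : ℕ → ℝ)
    (hpos : ∀ j ∈ Finset.Icc 1 n, 0 < lam j)
    (hle : ∀ j ∈ Finset.Icc 1 n, lam j ≤ mu j)
    (hmono : ∀ i j, 1 ≤ i → i ≤ j → j ≤ n → lam j ≤ lam i)
    (A : ℕ → ℝ) (hA : ∀ j, A j = ∑ l ∈ Finset.Icc 1 j, lam l)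
    (F : ℕ → ℝ) (hF1 : F 1 = lam 1 + mu 1)
    (hF : ∀ j, 2 ≤ j → j ≤ n → F j = max (A j) (F (j - 1)) + mu j) :
    ∀ j ∈ Finset.Icc 1 n, F j = lam 1 + ∑ l ∈ Finset.Icc 1 j, mu l :=
  stmt_1_general n lam mu hle hmono A hA F hF1 hF
end

section
/- Let n ≥ 1 and let λ, μ : {1,…,n} → ℝ satisfy 0 < λ_j ≤ μ_j for all j and λ_1 ≥ λ_2 ≥ … ≥ λ_n. In the no-idle schedule of Algorithm 1, the waiting time of patient j before seeing the physician, defined as w_j = max(A_j, F_{j-1}) − A_j (with w_1 = 0), equals w_j = Σ_{l=1}^{j-1} μ_l − Σ_{l=2}^{j} λ_l for every j ∈ {2,…,n}, and w_j ≥ 0 for all j. -/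
/-!
The physician never idles: patient `j + 1` leaves the assistant at `λ₁ + Σ_{l=2}^{j+1} λ_l`,
and since `λ_{l+1} ≤ λ_l ≤ μ_l` this is at most `λ₁ + Σ_{l=1}^{j} μ_l`, the time the physician
finishes patient `j` if he has not idled before. By induction `F_j = λ₁ + Σ_{l ≤ j} μ_l`, so
the waiting time `F_{j-1} - A_j` is the difference of the two sums and is nonnegative.
-/

open Finset

lemma sum_Icc_one_eq_add_sum_Icc_two {M : Type*} [AddCommMonoid M] (f : ℕ → M) {j : ℕ}
    (hj : 1 ≤ j) : ∑ l ∈ Icc 1 j, f l = f 1 + ∑ l ∈ Icc 2 j, f l := by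
  rw [Icc_eq_cons_Ioc hj, sum_cons, ← Icc_add_one_left_eq_Ioc]
  rfl

lemma sum_Icc_two_succ_le_sum_Icc_one {M : Type*} [AddCommMonoid M] [PartialOrder M]
    [IsOrderedAddMonoid M] {f g : ℕ → M} {j : ℕ} (h : ∀ l, 1 ≤ l → l ≤ j → f (l + 1) ≤ g l) :
    ∑ l ∈ Icc 2 (j + 1), f l ≤ ∑ l ∈ Icc 1 j, g l := by
  rw [← map_add_right_Icc 1 j 1, sum_map]
  exact sum_le_sum fun l hl ↦ h l (mem_Icc.1 hl).1 (mem_Icc.1 hl).2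

section NoIdleSchedule

variable {n : ℕ} {lam mu A F : ℕ → ℝ}

lemma arrival_le_of_step_le (hA : ∀ j, A j = ∑ l ∈ Icc 1 j, lam l)
    (hstep : ∀ l, 1 ≤ l → l < n → lam (l + 1) ≤ mu l) {j : ℕ} (hj : j + 1 ≤ n) :
    A (j + 1) ≤ lam 1 + ∑ l ∈ Icc 1 j, mu l := by
  rw [hA, sum_Icc_one_eq_add_sum_Icc_two _ (by omega)]
  gcongr
  exact sum_Icc_two_succ_le_sum_Icc_one fun l hl hlj ↦ hstep l hl (by omega)

lemma finish_eq_of_step_le (hA : ∀ j, A j = ∑ l ∈ Icc 1 j, lam l)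
    (hF1 : F 1 = lam 1 + mu 1)
    (hF : ∀ j, 2 ≤ j → j ≤ n → F j = max (A j) (F (j - 1)) + mu j)
    (hstep : ∀ l, 1 ≤ l → l < n → lam (l + 1) ≤ mu l) :
    ∀ j, 1 ≤ j → j ≤ n → F j = lam 1 + ∑ l ∈ Icc 1 j, mu l := by
  intro j hj
  induction j, hj using Nat.le_induction with
  | base => simp [hF1]
  | succ j hj ih =>
    intro hjn
    have hAF : A (j + 1) ≤ F j := ih (by omega) ▸ arrival_le_of_step_le hA hstep hjn
    rw [hF (j + 1) (by omega) hjn, Nat.add_sub_cancel, max_eq_right hAF, ih (by omega),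
      sum_Icc_succ_top (by omega), add_assoc]

end NoIdleSchedule

theorem stmt_2_general (n : ℕ) (lam mu : ℕ → ℝ)
    (hle : ∀ j ∈ Finset.Icc 1 n, lam j ≤ mu j)
    (hmono : ∀ i j, 1 ≤ i → i ≤ j → j ≤ n → lam j ≤ lam i)
    (A : ℕ → ℝ) (hA : ∀ j, A j = ∑ l ∈ Finset.Icc 1 j, lam l)
    (F : ℕ → ℝ) (hF1 : F 1 = lam 1 + mu 1)
    (hF : ∀ j, 2 ≤ j → j ≤ n → F j = max (A j) (F (j - 1)) + mu j)
    (w : ℕ → ℝ) (hw1 : w 1 = 0)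
    (hw : ∀ j, 2 ≤ j → j ≤ n → w j = max (A j) (F (j - 1)) - A j) :
    (∀ j, 2 ≤ j → j ≤ n →
        w j = (∑ l ∈ Finset.Icc 1 (j - 1), mu l) - ∑ l ∈ Finset.Icc 2 j, lam l)
      ∧ (∀ j ∈ Finset.Icc 1 n, 0 ≤ w j) := by
  have hstep : ∀ l, 1 ≤ l → l < n → lam (l + 1) ≤ mu l := fun l hl hln ↦
    (hmono l (l + 1) hl (by omega) hln).trans (hle l (mem_Icc.2 ⟨hl, by omega⟩))
  have hwait : ∀ j, 2 ≤ j → j ≤ n →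
      w j = (∑ l ∈ Icc 1 (j - 1), mu l) - ∑ l ∈ Icc 2 j, lam l := by
    intro j hj hjn
    obtain ⟨k, rfl⟩ : ∃ k, j = k + 1 := ⟨j - 1, by omega⟩
    rw [hw _ hj hjn, Nat.add_sub_cancel,
      finish_eq_of_step_le hA hF1 hF hstep k (by omega) (by omega), max_eq_right (arrival_le_of_step_le hA hstep hjn), hA,
      sum_Icc_one_eq_add_sum_Icc_two lam (by omega)]
    ring
  refine ⟨hwait, fun j hj ↦ ?_⟩
  obtain ⟨hj1, hjn⟩ := mem_Icc.1 hj
  rcases hj1.eq_or_lt with rfl | hj2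
  · exact hw1.ge
  · rw [hw j hj2 hjn, sub_nonneg]
    exact le_max_left _ _

/-- in the no-idle schedule of Algorithm 1, the stage-2 waiting time
`w_j = max(A_j, F_{j-1}) − A_j` (with `w_1 = 0`) equals
`Σ_{l=1}^{j-1} μ_l − Σ_{l=2}^{j} λ_l` for `j ∈ {2,…,n}`, and `w_j ≥ 0` for all `j`. -/
theorem stmt_2 (n : ℕ) (hn : 1 ≤ n) (lam mu : ℕ → ℝ)
    (hpos : ∀ j ∈ Finset.Icc 1 n, 0 < lam j)
    (hle : ∀ j ∈ Finset.Icc 1 n, lam j ≤ mu j)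
    (hmono : ∀ i j, 1 ≤ i → i ≤ j → j ≤ n → lam j ≤ lam i)
    (A : ℕ → ℝ) (hA : ∀ j, A j = ∑ l ∈ Finset.Icc 1 j, lam l)
    (F : ℕ → ℝ) (hF1 : F 1 = lam 1 + mu 1)
    (hF : ∀ j, 2 ≤ j → j ≤ n → F j = max (A j) (F (j - 1)) + mu j)
    (w : ℕ → ℝ) (hw1 : w 1 = 0)
    (hw : ∀ j, 2 ≤ j → j ≤ n → w j = max (A j) (F (j - 1)) - A j) :
    (∀ j, 2 ≤ j → j ≤ n →
        w j = (∑ l ∈ Finset.Icc 1 (j - 1), mu l) - ∑ l ∈ Finset.Icc 2 j, lam l)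
      ∧ (∀ j ∈ Finset.Icc 1 n, 0 ≤ w j) :=
  stmt_2_general n lam mu hle hmono A hA F hF1 hF w hw1 hw
end

section
/- Let λ, μ : P → ℝ be the service times of a finite set P of n ≥ 1 patients with 0 < λ_p ≤ μ_p for all p, and for a bijection σ : {1,…,n} → P define W(σ) = Σ_{i=1}^{n-1} (n−i)·(μ_{σ(i)} − λ_{σ(i+1)}). Let S be the set of bijections σ with λ_{σ(1)} ≥ λ_{σ(2)} ≥ … ≥ λ_{σ(n)}. If σ* ∈ S additionally satisfies the tie-breaking rule that λ_{σ*(i)} = λ_{σ*(i+1)} implies μ_{σ*(i)} ≤ μ_{σ*(i+1)} for all 1 ≤ i ≤ n−1 (the sequence produced by Algorithm 1), then W(σ*) ≤ W(σ) for every σ ∈ S (Lemma 3). -/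
/-!
Two enumerations of the patients that are both sorted by nonincreasing `λ` see the same
sequence of `λ`-values, so their `λ`-terms in `W` agree and only `Σ (n - i) μ_{σ(i)}` matters.
For a large constant `K`, the key `μ - K λ` is nondecreasing along `σ*`: between consecutive
positions with different `λ` the drop of `λ` pays for any drop of `μ`, and within a tie the
tie-breaking rule makes `μ` nondecreasing. Since `σ` permutes `σ*` inside the `λ`-levels, the
`λ`-part of the key contributes equally to both sides, and the rearrangement inequality against
the decreasing weights `n - i` gives the claim.
-/

open Finset

lemma monotoneOn_Icc_of_le_add_one {α : Type*} [Preorder α] {f : ℕ → α} {n : ℕ}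
    (hf : ∀ i, 1 ≤ i → i + 1 ≤ n → f i ≤ f (i + 1)) : MonotoneOn f (Set.Icc 1 n) :=
  monotoneOn_of_le_succ Set.ordConnected_Icc fun i _ hi hi' => by
    simp only [Order.succ_eq_add_one, Set.mem_Icc] at hi hi' ⊢
    exact hf i hi.1 hi'.2

lemma antitoneOn_Icc_of_add_one_le {α : Type*} [Preorder α] {f : ℕ → α} {n : ℕ}
    (hf : ∀ i, 1 ≤ i → i + 1 ≤ n → f (i + 1) ≤ f i) : AntitoneOn f (Set.Icc 1 n) :=
  monotoneOn_Icc_of_le_add_one (α := αᵒᵈ) hf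

lemma exists_le_mul_of_pos {ι 𝕜 : Type*} [Field 𝕜] [LinearOrder 𝕜] [IsStrictOrderedRing 𝕜]
    (s : Finset ι) (a b : ι → 𝕜) : ∃ K, ∀ i ∈ s, 0 < b i → a i ≤ K * b i := by
  refine ⟨∑ j ∈ s, |a j / b j|, fun i hi hb => ?_⟩
  have hquot : a i / b i ≤ ∑ j ∈ s, |a j / b j| :=
    (le_abs_self _).trans (single_le_sum (fun j _ => abs_nonneg (a j / b j)) hi)
  calc a i = a i / b i * b i := (div_mul_cancel₀ _ hb.ne').symm
    _ ≤ (∑ j ∈ s, |a j / b j|) * b i := by gcongr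

lemma Set.BijOn.exists_perm_comp_eq {ι β : Type*} {s : Set ι} {t : Set β} {σ τ : ι → β}
    (hσ : s.BijOn σ t) (hτ : s.BijOn τ t) :
    ∃ π : Equiv.Perm ι, {x | π x ≠ x} ⊆ s ∧ ∀ i ∈ s, τ (π i) = σ i := by
  classical
  let e : s ≃ s := (hσ.equiv σ).trans (hτ.equiv τ).symm
  refine ⟨Equiv.Perm.ofSubtype e, fun x hx => ?_, fun i hi => ?_⟩
  · by_contra hxs
    exact hx (Equiv.Perm.ofSubtype_apply_of_not_mem e hxs)
  · rw [Equiv.Perm.ofSubtype_apply_of_mem e hi]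
    show ((hτ.equiv τ) ((hτ.equiv τ).symm (hσ.equiv σ ⟨i, hi⟩)) : β) = σ i
    rw [Equiv.apply_symm_apply]
    rfl

section SortedEnumeration

variable {P α : Type*} [LinearOrder α] {f : P → α} {σ τ : ℕ → P} {n : ℕ}

lemma le_of_injOn_of_surjOn_of_antitoneOn [Fintype P] (hσ : (Set.Icc 1 n).InjOn σ)
    (hτ : (Set.Icc 1 n).SurjOn τ Set.univ) (hσf : AntitoneOn (f ∘ σ) (Set.Icc 1 n))
    (hτf : AntitoneOn (f ∘ τ) (Set.Icc 1 n)) {i : ℕ} (hi : i ∈ Set.Icc 1 n) :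
    f (σ i) ≤ f (τ i) := by
  classical
  by_contra! hlt
  -- `σ` takes values `≥ f (σ i)` at the `i` positions `1, …, i`, but `τ` only before position `i`.
  let A := univ.filter fun p => f (σ i) ≤ f p
  have hσA : i ≤ #A := by
    have h := card_le_card_of_injOn σ (s := Icc 1 i) (t := A)
      (fun j hj => by
        rw [coe_Icc] at hj
        simpa [A] using hσf ⟨hj.1, hj.2.trans hi.2⟩ hi hj.2)
      (hσ.mono (by rw [coe_Icc]; exact Set.Icc_subset_Icc_right hi.2))
    simpa using h
  have hτA : #A ≤ i - 1 := by
    have h := card_le_card_of_surjOn τ (s := Ico 1 i) (t := A) fun p hp => by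
      obtain ⟨j, hj, rfl⟩ := hτ (Set.mem_univ p)
      have hji : j < i := by
        by_contra! hij
        have hp' : f (σ i) ≤ f (τ j) := by simpa [A] using hp
        exact (hτf hi hj hij).not_gt (hlt.trans_le hp')
      exact ⟨j, by simpa using ⟨hj.1, hji⟩, rfl⟩
    simpa using h
  have hi1 := hi.1
  omega

lemma eqOn_comp_of_bijOn_of_antitoneOn [Fintype P] (hσ : (Set.Icc 1 n).BijOn σ Set.univ)
    (hτ : (Set.Icc 1 n).BijOn τ Set.univ) (hσf : AntitoneOn (f ∘ σ) (Set.Icc 1 n))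
    (hτf : AntitoneOn (f ∘ τ) (Set.Icc 1 n)) : (Set.Icc 1 n).EqOn (f ∘ σ) (f ∘ τ) :=
  fun _ hi => le_antisymm (le_of_injOn_of_surjOn_of_antitoneOn hσ.injOn hτ.surjOn hσf hτf hi)
    (le_of_injOn_of_surjOn_of_antitoneOn hτ.injOn hσ.surjOn hτf hσf hi)

end SortedEnumeration

theorem sum_mul_le_of_tie_break {P : Type*} (lam mu : P → ℝ) {n : ℕ} {w : ℕ → ℝ}
    (hw : Antitone w) {σ τ : ℕ → P} (hσ : (Set.Icc 1 n).BijOn σ Set.univ)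
    (hτ : (Set.Icc 1 n).BijOn τ Set.univ) (hlam : (Set.Icc 1 n).EqOn (lam ∘ σ) (lam ∘ τ))
    (hτ_anti : AntitoneOn (lam ∘ τ) (Set.Icc 1 n))
    (hτ_tie : ∀ i, 1 ≤ i → i + 1 ≤ n → lam (τ i) = lam (τ (i + 1)) → mu (τ i) ≤ mu (τ (i + 1))) :
    ∑ i ∈ Icc 1 n, w i * mu (τ i) ≤ ∑ i ∈ Icc 1 n, w i * mu (σ i) := by
  obtain ⟨K, hK⟩ := exists_le_mul_of_pos (Icc 1 n) (fun i => mu (τ i) - mu (τ (i + 1)))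
    (fun i => lam (τ i) - lam (τ (i + 1)))
  let G : ℕ → ℝ := fun i => mu (τ i) - K * lam (τ i)
  have hG : MonotoneOn G (Set.Icc 1 n) := monotoneOn_Icc_of_le_add_one fun i hi hin => by
    have hstep : lam (τ (i + 1)) ≤ lam (τ i) :=
      hτ_anti ⟨hi, by omega⟩ ⟨by omega, hin⟩ (Nat.le_succ i)
    rcases hstep.eq_or_lt with htie | hdrop
    · have := hτ_tie i hi hin htie.symm
      simp only [G, htie]
      linarith
    · have := hK i (mem_Icc.2 ⟨hi, by omega⟩) (sub_pos.2 hdrop)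
      simp only [G]
      linarith
  obtain ⟨π, hπ_supp, hπ⟩ := hσ.exists_perm_comp_eq hτ
  rw [← coe_Icc] at hG hπ_supp
  have hrearr := ((hw.antitoneOn _).antivaryOn hG).sum_smul_le_sum_smul_comp_perm hπ_supp
  have hGπ : ∀ i ∈ Icc 1 n, w i • G (π i) = w i * mu (σ i) - K * (w i * lam (τ i)) := by
    intro i hi
    have hi : i ∈ Set.Icc 1 n := by rwa [← coe_Icc]
    have hlam_i : lam (σ i) = lam (τ i) := hlam hi
    simp only [G, smul_eq_mul, hπ i hi, hlam_i]
    ring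
  have hG_id : ∀ i ∈ Icc 1 n, w i • G i = w i * mu (τ i) - K * (w i * lam (τ i)) :=
    fun i _ => by simp only [G, smul_eq_mul]; ring
  rw [sum_congr rfl hGπ, sum_congr rfl hG_id, sum_sub_distrib, sum_sub_distrib] at hrearr
  linarith

lemma sum_Icc_sub_one_natSub_mul (n : ℕ) (x : ℕ → ℝ) :
    ∑ i ∈ Icc 1 (n - 1), ((n - i : ℕ) : ℝ) * x i = ∑ i ∈ Icc 1 n, ((n - i : ℕ) : ℝ) * x i := by
  cases n with
  | zero => simp
  | succ m => rw [sum_Icc_succ_top (by omega)]; simp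

theorem stmt_5_general (P : Type*) [Fintype P] (lam mu : P → ℝ)
    (n : ℕ)
    (σstar : ℕ → P) (hσstar : Set.BijOn σstar (Set.Icc 1 n) Set.univ)
    (hstar_mono : ∀ i, 1 ≤ i → i + 1 ≤ n → lam (σstar (i + 1)) ≤ lam (σstar i))
    (hstar_tie : ∀ i, 1 ≤ i → i + 1 ≤ n →
      lam (σstar i) = lam (σstar (i + 1)) → mu (σstar i) ≤ mu (σstar (i + 1))) :
    ∀ σ : ℕ → P, Set.BijOn σ (Set.Icc 1 n) Set.univ →
      (∀ i, 1 ≤ i → i + 1 ≤ n → lam (σ (i + 1)) ≤ lam (σ i)) →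
      (∑ i ∈ Finset.Icc 1 (n - 1), ((n - i : ℕ) : ℝ) * (mu (σstar i) - lam (σstar (i + 1))))
        ≤ ∑ i ∈ Finset.Icc 1 (n - 1), ((n - i : ℕ) : ℝ) * (mu (σ i) - lam (σ (i + 1))) := by
  intro σ hσ hσ_mono
  have hstar_anti := antitoneOn_Icc_of_add_one_le (f := lam ∘ σstar) hstar_mono
  have hlam : (Set.Icc 1 n).EqOn (lam ∘ σ) (lam ∘ σstar) :=
    eqOn_comp_of_bijOn_of_antitoneOn hσ hσstar
      (antitoneOn_Icc_of_add_one_le (f := lam ∘ σ) hσ_mono) hstar_anti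
  have hmu := sum_mul_le_of_tie_break lam mu (w := fun i => ((n - i : ℕ) : ℝ))
    (fun _ _ hij => Nat.cast_le.2 (Nat.sub_le_sub_left hij n)) hσ hσstar hlam hstar_anti hstar_tie
  simp only [← sum_Icc_sub_one_natSub_mul] at hmu
  have hlam_sum : ∑ i ∈ Icc 1 (n - 1), ((n - i : ℕ) : ℝ) * lam (σ (i + 1)) =
      ∑ i ∈ Icc 1 (n - 1), ((n - i : ℕ) : ℝ) * lam (σstar (i + 1)) :=
    sum_congr rfl fun i hi => by
      rw [mem_Icc] at hi
      rw [show lam (σ (i + 1)) = lam (σstar (i + 1)) from hlam ⟨by omega, by omega⟩]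
  simp only [mul_sub, sum_sub_distrib]
  linarith

/-- Lemma 3: among all sequences `σ` of the `n` patients with
nonincreasing `λ∘σ`, the sequence `σ*` that additionally breaks ties in `λ` in
favor of smaller `μ` (the sequence produced by Algorithm 1) minimizes the total
waiting time `W(σ) = Σ_{i=1}^{n-1} (n−i)(μ_{σ(i)} − λ_{σ(i+1)})`. -/
theorem stmt_5 (P : Type*) [Fintype P] (lam mu : P → ℝ)
    (hpos : ∀ p, 0 < lam p) (hle : ∀ p, lam p ≤ mu p)
    (n : ℕ) (hn1 : 1 ≤ n) (hn : n = Fintype.card P)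
    (σstar : ℕ → P) (hσstar : Set.BijOn σstar (Set.Icc 1 n) Set.univ)
    (hstar_mono : ∀ i, 1 ≤ i → i + 1 ≤ n → lam (σstar (i + 1)) ≤ lam (σstar i))
    (hstar_tie : ∀ i, 1 ≤ i → i + 1 ≤ n →
      lam (σstar i) = lam (σstar (i + 1)) → mu (σstar i) ≤ mu (σstar (i + 1))) :
    ∀ σ : ℕ → P, Set.BijOn σ (Set.Icc 1 n) Set.univ →
      (∀ i, 1 ≤ i → i + 1 ≤ n → lam (σ (i + 1)) ≤ lam (σ i)) →
      (∑ i ∈ Finset.Icc 1 (n - 1), ((n - i : ℕ) : ℝ) * (mu (σstar i) - lam (σstar (i + 1))))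
        ≤ ∑ i ∈ Finset.Icc 1 (n - 1), ((n - i : ℕ) : ℝ) * (mu (σ i) - lam (σ (i + 1))) :=
  stmt_5_general P lam mu n σstar hσstar hstar_mono hstar_tie
end

section
/- Let n ≥ 2 and let λ, μ : {1,…,n} → ℝ satisfy 0 < λ_j ≤ μ_j for all j and λ_1 ≥ λ_2 ≥ … ≥ λ_n. Then the total patient waiting time W = Σ_{j=1}^{n-1} (n−j)·(μ_j − λ_{j+1}) satisfies W ≥ γ₁ − γ₂, where γ₁ = max_{1 ≤ j ≤ n−1} μ_j and γ₂ = min_{2 ≤ j ≤ n} λ_j; hence the upper bound (n(n−1)/2)(γ₁ − γ₂) of Lemma 4 is tight up to the constant factor n(n−1)/2 (tightness part of Lemma 4). -/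
/-! If `μ` attains its maximum over `1, …, n-1` at `a`, then dropping the weights `n - j ≥ 1`
and the (nonnegative) terms with `j < a` leaves `∑_{j=a}^{n-1} (μ_j - λ_{j+1})`, which telescopes to
`μ_a - λ_n + ∑_{j=a+1}^{n-1} (μ_j - λ_j) ≥ μ_a - λ_n`; by monotonicity `λ_n` is the minimum of `λ`
over `2, …, n`. -/

open Finset

theorem sub_le_sum_Icc_sub_succ {lam mu : ℕ → ℝ} {a b : ℕ} (hab : a ≤ b)
    (hle : ∀ j ∈ Ioc a b, lam j ≤ mu j) :
    mu a - lam (b + 1) ≤ ∑ j ∈ Icc a b, (mu j - lam (j + 1)) := by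
  induction b, hab using Nat.le_induction with
  | base => simp
  | succ b hab ih =>
    rw [sum_Icc_succ_top (by omega)]
    have hb : lam (b + 1) ≤ mu (b + 1) := hle (b + 1) (mem_Ioc.mpr ⟨by omega, le_rfl⟩)
    have := ih fun j hj => hle j (Ioc_subset_Ioc_right b.le_succ hj)
    linarith

/-- tightness part of Lemma 4: with `n ≥ 2` `Q⁺` patients ordered
by Algorithm 1, the total waiting time `W = Σ_{j=1}^{n-1} (n−j)(μ_j − λ_{j+1})`
satisfies `W ≥ γ₁ − γ₂` where `γ₁ = max_{1≤j≤n−1} μ_j` and `γ₂ = min_{2≤j≤n} λ_j`. -/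
theorem stmt_7 (n : ℕ) (hn : 2 ≤ n) (lam mu : ℕ → ℝ)
    (hle : ∀ j ∈ Finset.Icc 1 n, lam j ≤ mu j)
    (hmono : ∀ i j, 1 ≤ i → i ≤ j → j ≤ n → lam j ≤ lam i) :
    (Finset.Icc 1 (n - 1)).sup' (Finset.nonempty_Icc.mpr (by omega)) mu
        - (Finset.Icc 2 n).inf' (Finset.nonempty_Icc.mpr hn) lam
      ≤ ∑ j ∈ Finset.Icc 1 (n - 1), ((n - j : ℕ) : ℝ) * (mu j - lam (j + 1)) := by
  obtain ⟨a, ha, hsup⟩ := exists_mem_eq_sup' (nonempty_Icc.mpr (by omega : 1 ≤ n - 1)) mu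
  rw [mem_Icc] at ha
  have hinf : lam n ≤ (Icc 2 n).inf' (nonempty_Icc.mpr hn) lam :=
    le_inf' _ _ fun j hj => hmono j n (by grind) (mem_Icc.mp hj).2 le_rfl
  have hterm : ∀ j ∈ Icc 1 (n - 1), 0 ≤ mu j - lam (j + 1) := fun j hj => by
    rw [mem_Icc] at hj
    linarith [hmono j (j + 1) hj.1 j.le_succ (by omega), hle j (mem_Icc.mpr ⟨hj.1, by omega⟩)]
  calc _ ≤ mu a - lam (n - 1 + 1) := by rw [hsup, Nat.sub_add_cancel (by omega)]; linarith
    _ ≤ ∑ j ∈ Icc a (n - 1), (mu j - lam (j + 1)) :=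
      sub_le_sum_Icc_sub_succ ha.2 fun j hj => hle j (by grind)
    _ ≤ ∑ j ∈ Icc 1 (n - 1), (mu j - lam (j + 1)) :=
      sum_le_sum_of_subset_of_nonneg (Icc_subset_Icc_left ha.1) fun j hj _ => hterm j hj
    _ ≤ _ := sum_le_sum fun j hj => le_mul_of_one_le_left (hterm j hj) <| by
      rw [mem_Icc] at hj
      exact_mod_cast (by omega : 1 ≤ n - j)
end

section
/- Let r ≥ 1, 0 ≤ w ≤ 2, and λ : {1,…,r} → ℝ with λ_j > 0 for all j. Set appointment times τ_1 = 0 and τ_j = (1 − w/2)·Σ_{l=1}^{j-1} λ_l for j ≥ 2. Suppose the realized service times λ̃_j satisfy λ̃_j ≥ (1 − w/2)·λ_j for all j. Define the PA start times recursively by s_1 = 0 and s_{j+1} = max(τ_{j+1}, s_j + λ̃_j). Then s_j = Σ_{l=1}^{j-1} λ̃_l for every j ∈ {1,…,r}; that is, the physician assistant incurs no idle time on any such realized sample path (PA part of Lemma 6). -/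
/-!
Whenever every appointment time `τ_{j+1}` is at most the cumulative realized service time
`Σ_{l ≤ j} λ̃_l`, the maximum in the start-time recursion is always attained by the second
argument, so by induction the PA start times are exactly the partial sums of the realized
service times. The appointment times `(1 - w/2) Σ_{l ≤ j} λ_l` satisfy this bound termwise,
because each realized service time is at least `(1 - w/2) λ_l`.
-/

theorem start_eq_sum_of_appointment_le_sum {r : ℕ} {τ s p : ℕ → ℝ} (hs1 : s 1 = 0)
    (hs : ∀ j, 1 ≤ j → j + 1 ≤ r → s (j + 1) = max (τ (j + 1)) (s j + p j))
    (hτ : ∀ j, 1 ≤ j → j + 1 ≤ r → τ (j + 1) ≤ ∑ l ∈ Finset.Icc 1 j, p l) :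
    ∀ k, k + 1 ≤ r → s (k + 1) = ∑ l ∈ Finset.Icc 1 k, p l := by
  intro k hk
  induction k with
  | zero => simpa using hs1
  | succ k ih =>
    have hsum : ∑ l ∈ Finset.Icc 1 (k + 1), p l = ∑ l ∈ Finset.Icc 1 k, p l + p (k + 1) :=
      Finset.sum_Icc_succ_top (by omega) p
    rw [hs (k + 1) (by omega) hk, ih (by omega), ← hsum]
    exact max_eq_right (hτ (k + 1) (by omega) hk)

theorem stmt_9_general (r : ℕ) (w : ℝ)
    (lam lamT : ℕ → ℝ)
    (hreal : ∀ j ∈ Finset.Icc 1 r, (1 - w / 2) * lam j ≤ lamT j)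
    (τ : ℕ → ℝ) (hτ : ∀ j, τ j = (1 - w / 2) * ∑ l ∈ Finset.Icc 1 (j - 1), lam l)
    (s : ℕ → ℝ) (hs1 : s 1 = 0)
    (hs : ∀ j, 1 ≤ j → j + 1 ≤ r → s (j + 1) = max (τ (j + 1)) (s j + lamT j)) :
    ∀ j ∈ Finset.Icc 1 r, s j = ∑ l ∈ Finset.Icc 1 (j - 1), lamT l := by
  have happt : ∀ j, 1 ≤ j → j + 1 ≤ r → τ (j + 1) ≤ ∑ l ∈ Finset.Icc 1 j, lamT l := by
    intro j _ hjr
    rw [hτ, Nat.add_sub_cancel, Finset.mul_sum]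
    exact Finset.sum_le_sum fun l hl => hreal l (Finset.Icc_subset_Icc_right (by omega) hl)
  intro j hj
  obtain ⟨hj1, hjr⟩ := Finset.mem_Icc.mp hj
  obtain ⟨k, rfl⟩ := Nat.exists_eq_add_of_le' hj1
  rw [Nat.add_sub_cancel]
  exact start_eq_sum_of_appointment_le_sum hs1 hs happt k hjr

/-- PA part of Lemma 6: with appointment times
`τ_j = (1 − w/2)·Σ_{l=1}^{j-1} λ_l` (so `τ_1 = 0`) and realized service times
`λ̃_j ≥ (1 − w/2)·λ_j`, the PA start times `s_1 = 0`,
`s_{j+1} = max(τ_{j+1}, s_j + λ̃_j)` satisfy `s_j = Σ_{l=1}^{j-1} λ̃_l` for all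
`j ∈ {1,…,r}`: the PA incurs no idle time on any such realized sample path. -/
theorem stmt_9 (r : ℕ) (hr : 1 ≤ r) (w : ℝ) (hw0 : 0 ≤ w) (hw2 : w ≤ 2)
    (lam lamT : ℕ → ℝ)
    (hpos : ∀ j ∈ Finset.Icc 1 r, 0 < lam j)
    (hreal : ∀ j ∈ Finset.Icc 1 r, (1 - w / 2) * lam j ≤ lamT j)
    (τ : ℕ → ℝ) (hτ : ∀ j, τ j = (1 - w / 2) * ∑ l ∈ Finset.Icc 1 (j - 1), lam l)
    (s : ℕ → ℝ) (hs1 : s 1 = 0)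
    (hs : ∀ j, 1 ≤ j → j + 1 ≤ r → s (j + 1) = max (τ (j + 1)) (s j + lamT j)) :
    ∀ j ∈ Finset.Icc 1 r, s j = ∑ l ∈ Finset.Icc 1 (j - 1), lamT l :=
  stmt_9_general r w lam lamT hreal τ hτ s hs1 hs
end

section
/- Let g ≥ 2, let λ, μ : {1,…,g} → ℝ satisfy 0 < λ_j ≤ μ_j for all j and λ_1 ≥ λ_2 ≥ … ≥ λ_g, and let w ≥ 0 satisfy w·Σ_{k=1}^{i} (μ_k + λ_{k+1}) ≤ 2·Σ_{k=1}^{i} (μ_k − λ_{k+1}) for every 1 ≤ i ≤ g−1. Suppose realized service times satisfy λ̃_k ≤ (1 + w/2)·λ_k and μ̃_k ≥ (1 − w/2)·μ_k for all k. Then Σ_{k=1}^{i} μ̃_k ≥ Σ_{k=2}^{i+1} λ̃_k for every 1 ≤ i ≤ g−1 (the key inequality ensuring no physician idle time in Lemma 6). -/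
/-!
Bound each realized time by its worst case, `λ̃_{k+1} ≤ (1 + w/2) λ_{k+1}` and
`μ̃_k ≥ (1 - w/2) μ_k`. After reindexing `Σ_{k=2}^{i+1} λ̃_k` as `Σ_{k=1}^{i} λ̃_{k+1}`,
the gap between the two worst-case sums is `Σ (μ_k - λ_{k+1}) - (w/2) Σ (μ_k + λ_{k+1})`,
which is nonnegative precisely by the hypothesis on `w`.
-/

open Finset

theorem sum_le_sum_of_le_mul_of_mul_le {ι : Type*} (s : Finset ι) (a b x y : ι → ℝ) (w : ℝ)
    (hx : ∀ k ∈ s, x k ≤ (1 + w / 2) * a k) (hy : ∀ k ∈ s, (1 - w / 2) * b k ≤ y k)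
    (hw : w * ∑ k ∈ s, (b k + a k) ≤ 2 * ∑ k ∈ s, (b k - a k)) :
    ∑ k ∈ s, x k ≤ ∑ k ∈ s, y k := by
  have worst_case : ∑ k ∈ s, (1 + w / 2) * a k ≤ ∑ k ∈ s, (1 - w / 2) * b k := by
    simp only [← mul_sum, sum_add_distrib, sum_sub_distrib] at hw ⊢
    linarith
  calc ∑ k ∈ s, x k ≤ ∑ k ∈ s, (1 + w / 2) * a k := sum_le_sum hx
    _ ≤ ∑ k ∈ s, (1 - w / 2) * b k := worst_case
    _ ≤ ∑ k ∈ s, y k := sum_le_sum hy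

theorem Nat.sum_Icc_add_one {M : Type*} [AddCommMonoid M] (f : ℕ → M) (a b : ℕ) :
    ∑ k ∈ Icc (a + 1) (b + 1), f k = ∑ k ∈ Icc a b, f (k + 1) := by
  rw [← map_add_right_Icc, sum_map]
  rfl

theorem stmt_10_general (g : ℕ) (lam mu : ℕ → ℝ)
    (w : ℝ)
    (hcond : ∀ i, 1 ≤ i → i ≤ g - 1 →
      w * ∑ k ∈ Finset.Icc 1 i, (mu k + lam (k + 1))
        ≤ 2 * ∑ k ∈ Finset.Icc 1 i, (mu k - lam (k + 1)))
    (lamT muT : ℕ → ℝ)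
    (hlamT : ∀ k ∈ Finset.Icc 1 g, lamT k ≤ (1 + w / 2) * lam k)
    (hmuT : ∀ k ∈ Finset.Icc 1 g, (1 - w / 2) * mu k ≤ muT k) :
    ∀ i, 1 ≤ i → i ≤ g - 1 →
      (∑ k ∈ Finset.Icc 2 (i + 1), lamT k) ≤ ∑ k ∈ Finset.Icc 1 i, muT k := by
  intro i hi hig
  rw [Nat.sum_Icc_add_one lamT 1 i]
  refine sum_le_sum_of_le_mul_of_mul_le _ (fun k ↦ lam (k + 1)) mu _ _ w ?_ ?_ (hcond i hi hig)
  · intro k hk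
    rw [mem_Icc] at hk
    exact hlamT (k + 1) (mem_Icc.mpr ⟨by omega, by omega⟩)
  · intro k hk
    rw [mem_Icc] at hk
    exact hmuT k (mem_Icc.mpr ⟨hk.1, by omega⟩)

/-- key inequality in Lemma 6: if
`w·Σ_{k=1}^{i}(μ_k + λ_{k+1}) ≤ 2·Σ_{k=1}^{i}(μ_k − λ_{k+1})` for all
`1 ≤ i ≤ g−1`, and the realized times satisfy `λ̃_k ≤ (1 + w/2)λ_k`,
`μ̃_k ≥ (1 − w/2)μ_k`, then `Σ_{k=1}^{i} μ̃_k ≥ Σ_{k=2}^{i+1} λ̃_k` for all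
`1 ≤ i ≤ g−1`. -/
theorem stmt_10 (g : ℕ) (hg : 2 ≤ g) (lam mu : ℕ → ℝ)
    (hpos : ∀ j ∈ Finset.Icc 1 g, 0 < lam j)
    (hle : ∀ j ∈ Finset.Icc 1 g, lam j ≤ mu j)
    (hmono : ∀ i j, 1 ≤ i → i ≤ j → j ≤ g → lam j ≤ lam i)
    (w : ℝ) (hw : 0 ≤ w)
    (hcond : ∀ i, 1 ≤ i → i ≤ g - 1 →
      w * ∑ k ∈ Finset.Icc 1 i, (mu k + lam (k + 1))
        ≤ 2 * ∑ k ∈ Finset.Icc 1 i, (mu k - lam (k + 1)))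
    (lamT muT : ℕ → ℝ)
    (hlamT : ∀ k ∈ Finset.Icc 1 g, lamT k ≤ (1 + w / 2) * lam k)
    (hmuT : ∀ k ∈ Finset.Icc 1 g, (1 - w / 2) * mu k ≤ muT k) :
    ∀ i, 1 ≤ i → i ≤ g - 1 →
      (∑ k ∈ Finset.Icc 2 (i + 1), lamT k) ≤ ∑ k ∈ Finset.Icc 1 i, muT k :=
  stmt_10_general g lam mu w hcond lamT muT hlamT hmuT
end

section
/- Let g ≥ 1, let λ, μ : {1,…,g} → ℝ satisfy 0 < λ_j ≤ μ_j for all j and λ_1 ≥ λ_2 ≥ … ≥ λ_g, and let w ∈ [0,2] satisfy w·Σ_{k=1}^{i} (μ_k + λ_{k+1}) ≤ 2·Σ_{k=1}^{i} (μ_k − λ_{k+1}) for every 1 ≤ i ≤ g−1. Suppose realized service times satisfy (1 − w/2)λ_j ≤ λ̃_j ≤ (1 + w/2)λ_j and (1 − w/2)μ_j ≤ μ̃_j ≤ (1 + w/2)μ_j for all j. Let C_j = Σ_{l=1}^{j} λ̃_l be the realized PA completion times, and define the realized physician completion times by F̃_1 = C_1 + μ̃_1 and F̃_j = max(C_j,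 F̃_{j-1}) + μ̃_j for j ≥ 2. Then F̃_j = λ̃_1 + Σ_{l=1}^{j} μ̃_l for every j ∈ {1,…,g}; that is, under the stated bound on w, the schedule of Algorithm 1 has no physician idle time on every realized sample path (Lemma 6). -/
/-! If patient `j + 1` always leaves the PA before the physician, working without idle time, has
finished patients `1, …, j`, the physician never waits, and the recursion for `F̃` telescopes to
`F̃_j = C_1 + Σ_{l ≤ j} μ̃_l`. Writing `C_{j+1} = λ̃_1 + Σ_{k ≤ j} λ̃_{k+1}`, that condition reads
`Σ_{k ≤ j} λ̃_{k+1} ≤ Σ_{k ≤ j} μ̃_k`, and it holds on every sample path because the worst case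
`Σ (1 + w/2) λ_{k+1} ≤ Σ (1 - w/2) μ_k` is exactly the assumed bound on `w`. -/

open Finset

theorem Finset.sum_Icc_one_succ_eq_add {M : Type*} [AddCommMonoid M] (f : ℕ → M) (n : ℕ) :
    ∑ l ∈ Icc 1 (n + 1), f l = f 1 + ∑ k ∈ Icc 1 n, f (k + 1) := by
  induction n with
  | zero => simp
  | succ n ih =>
    rw [sum_Icc_succ_top (by omega), ih, sum_Icc_succ_top (by omega), add_assoc]

theorem sum_le_sum_of_worst_case_margin {ι : Type*} (s : Finset ι) (a b lam mu : ι → ℝ) (w : ℝ)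
    (ha : ∀ k ∈ s, a k ≤ (1 + w / 2) * lam k) (hb : ∀ k ∈ s, (1 - w / 2) * mu k ≤ b k)
    (hw : w * ∑ k ∈ s, (mu k + lam k) ≤ 2 * ∑ k ∈ s, (mu k - lam k)) :
    ∑ k ∈ s, a k ≤ ∑ k ∈ s, b k := by
  have hmargin : (1 + w / 2) * ∑ k ∈ s, lam k ≤ (1 - w / 2) * ∑ k ∈ s, mu k := by
    rw [sum_add_distrib, sum_sub_distrib] at hw
    linarith
  calc ∑ k ∈ s, a k ≤ ∑ k ∈ s, (1 + w / 2) * lam k := sum_le_sum ha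
    _ ≤ ∑ k ∈ s, (1 - w / 2) * mu k := by rwa [← mul_sum, ← mul_sum]
    _ ≤ ∑ k ∈ s, b k := sum_le_sum hb

theorem completion_eq_add_sum_of_arrival_le (g : ℕ) (C s F : ℕ → ℝ) (hF1 : F 1 = C 1 + s 1)
    (hF : ∀ j, 2 ≤ j → j ≤ g → F j = max (C j) (F (j - 1)) + s j)
    (hC : ∀ j, 1 ≤ j → j < g → C (j + 1) ≤ C 1 + ∑ l ∈ Icc 1 j, s l) :
    ∀ j, 1 ≤ j → j ≤ g → F j = C 1 + ∑ l ∈ Icc 1 j, s l := by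
  intro j hj
  induction j, hj using Nat.le_induction with
  | base => simp [hF1]
  | succ j hj ih =>
    intro hjg
    have hFj := ih (by omega)
    rw [hF (j + 1) (by omega) hjg, Nat.add_sub_cancel, hFj,
      max_eq_right (hFj ▸ hC j hj hjg), sum_Icc_succ_top (by omega), add_assoc]

theorem stmt_11_general (g : ℕ) (lam mu : ℕ → ℝ)
    (w : ℝ)
    (hcond : ∀ i, 1 ≤ i → i ≤ g - 1 →
      w * ∑ k ∈ Finset.Icc 1 i, (mu k + lam (k + 1))
        ≤ 2 * ∑ k ∈ Finset.Icc 1 i, (mu k - lam (k + 1)))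
    (lamT muT : ℕ → ℝ)
    (hlamT : ∀ j ∈ Finset.Icc 1 g,
      (1 - w / 2) * lam j ≤ lamT j ∧ lamT j ≤ (1 + w / 2) * lam j)
    (hmuT : ∀ j ∈ Finset.Icc 1 g,
      (1 - w / 2) * mu j ≤ muT j ∧ muT j ≤ (1 + w / 2) * mu j)
    (C : ℕ → ℝ) (hC : ∀ j, C j = ∑ l ∈ Finset.Icc 1 j, lamT l)
    (Ft : ℕ → ℝ) (hFt1 : Ft 1 = C 1 + muT 1)
    (hFt : ∀ j, 2 ≤ j → j ≤ g → Ft j = max (C j) (Ft (j - 1)) + muT j) :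
    ∀ j ∈ Finset.Icc 1 g, Ft j = lamT 1 + ∑ l ∈ Finset.Icc 1 j, muT l := by
  have hC1 : C 1 = lamT 1 := by simp [hC]
  have hnowait : ∀ j, 1 ≤ j → j < g → C (j + 1) ≤ C 1 + ∑ l ∈ Icc 1 j, muT l := by
    intro j hj hjg
    rw [hC, sum_Icc_one_succ_eq_add, hC1]
    gcongr lamT 1 + ?_
    refine sum_le_sum_of_worst_case_margin _ _ _ (fun k ↦ lam (k + 1)) mu w
      (fun k hk ↦ (hlamT (k + 1) ?_).2) (fun k hk ↦ (hmuT k ?_).1) (hcond j hj (by omega)) <;>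
    · simp only [mem_Icc] at hk ⊢
      omega
  intro j hj
  rw [← hC1]
  exact completion_eq_add_sum_of_arrival_le g C muT Ft hFt1 hFt hnowait j
    (mem_Icc.1 hj).1 (mem_Icc.1 hj).2

/-- Lemma 6: under the stated bound on `w`, the schedule of
Algorithm 1 has no physician idle time on every realized sample path: the
realized physician completion times `F̃_1 = C_1 + μ̃_1`,
`F̃_j = max(C_j, F̃_{j-1}) + μ̃_j` (with `C_j = Σ_{l=1}^{j} λ̃_l`) satisfy
`F̃_j = λ̃_1 + Σ_{l=1}^{j} μ̃_l` for all `j ∈ {1,…,g}`. -/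
theorem stmt_11 (g : ℕ) (hg : 1 ≤ g) (lam mu : ℕ → ℝ)
    (hpos : ∀ j ∈ Finset.Icc 1 g, 0 < lam j)
    (hle : ∀ j ∈ Finset.Icc 1 g, lam j ≤ mu j)
    (hmono : ∀ i j, 1 ≤ i → i ≤ j → j ≤ g → lam j ≤ lam i)
    (w : ℝ) (hw0 : 0 ≤ w) (hw2 : w ≤ 2)
    (hcond : ∀ i, 1 ≤ i → i ≤ g - 1 →
      w * ∑ k ∈ Finset.Icc 1 i, (mu k + lam (k + 1))
        ≤ 2 * ∑ k ∈ Finset.Icc 1 i, (mu k - lam (k + 1)))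
    (lamT muT : ℕ → ℝ)
    (hlamT : ∀ j ∈ Finset.Icc 1 g,
      (1 - w / 2) * lam j ≤ lamT j ∧ lamT j ≤ (1 + w / 2) * lam j)
    (hmuT : ∀ j ∈ Finset.Icc 1 g,
      (1 - w / 2) * mu j ≤ muT j ∧ muT j ≤ (1 + w / 2) * mu j)
    (C : ℕ → ℝ) (hC : ∀ j, C j = ∑ l ∈ Finset.Icc 1 j, lamT l)
    (Ft : ℕ → ℝ) (hFt1 : Ft 1 = C 1 + muT 1)
    (hFt : ∀ j, 2 ≤ j → j ≤ g → Ft j = max (C j) (Ft (j - 1)) + muT j) :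
    ∀ j ∈ Finset.Icc 1 g, Ft j = lamT 1 + ∑ l ∈ Finset.Icc 1 j, muT l :=
  stmt_11_general g lam mu w hcond lamT muT hlamT hmuT C hC Ft hFt1 hFt
end
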